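/- arXiv:1610.09026 — 2 statements merged into one kernel-verified Lean document; each statement's English description precedes it below -/
import Mathlib

section
/- Theorem (equivalence of Newman's r and Bergstrom's α): In a reciprocated two-type network with every node having out-degree at least 1 and both types present, if each outgoing edge of node s is weighted Z_s = c/K_s (inverse degree weighting, c > 0), then Newman's assortativity coefficient r computed from the weighted edge proportions equals Bergstrom's α = (1/|N+|)∑_{s∈N+} π_s/K_s − (1/|N-|)∑_{s∈N-} π_s/K_s. -/
open Finset

/-- main theorem: with inverse-degree edge weights Z_s = c/K_s
in a reciprocated two-type network, Newman's assortativity coefficient r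
equals Bergstrom's homophily coefficient α. -/
theorem newman_eq_bergstrom
    {V : Type*} [Fintype V] [DecidableEq V]
    (pos : V → Bool) (π ν : V → ℕ)
    (hdeg : ∀ s, 1 ≤ π s + ν s)
    (hNp : (univ.filter (fun s => pos s = true)).Nonempty)
    (hNm : (univ.filter (fun s => pos s = false)).Nonempty)
    (c : ℝ) (hc : 0 < c)
    (Z : V → ℝ) (hZ : ∀ s, Z s = c / ((π s : ℝ) + (ν s : ℝ)))
    (P M Q : ℝ)
    (hP : P = ∑ s ∈ univ.filter (fun s => pos s = true), Z s * (π s : ℝ))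
    (hM : M = ∑ s ∈ univ.filter (fun s => pos s = true), Z s * (ν s : ℝ))
    (hQ : Q = ∑ s ∈ univ.filter (fun s => pos s = false), Z s * (ν s : ℝ))
    -- reciprocity: the weighted count of −→+ edges equals that of +→− edges
    (hrec : ∑ s ∈ univ.filter (fun s => pos s = false), Z s * (π s : ℝ) = M)
    (T : ℝ) (hT : T = P + 2 * M + Q) (hTpos : 0 < T)
    (epp emm epm ap am : ℝ)
    (hepp : epp = P / T) (hemm : emm = Q / T) (hepm : epm = M / T)
    (hap : ap = epp + epm) (ham : am = epm + emm)
    (hden : 0 < 1 - ap ^ 2 - am ^ 2)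
    (r : ℝ) (hr : r = (epp + emm - ap ^ 2 - am ^ 2) / (1 - ap ^ 2 - am ^ 2))
    (α : ℝ)
    (hα : α =
      (1 / ((univ.filter (fun s => pos s = true)).card : ℝ)) *
        ∑ s ∈ univ.filter (fun s => pos s = true),
          (π s : ℝ) / ((π s : ℝ) + (ν s : ℝ)) -
      (1 / ((univ.filter (fun s => pos s = false)).card : ℝ)) *
        ∑ s ∈ univ.filter (fun s => pos s = false),
          (π s : ℝ) / ((π s : ℝ) + (ν s : ℝ))) :
    r = α := by

  set Np := univ.filter (fun s => pos s = true) with hNpdef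
  set Nm := univ.filter (fun s => pos s = false) with hNmdef
  have hK : ∀ s : V, (0:ℝ) < (π s : ℝ) + (ν s : ℝ) := by
    intro s
    have := hdeg s
    have : (1:ℝ) ≤ ((π s + ν s : ℕ) : ℝ) := by exact_mod_cast this
    push_cast at this
    linarith
  have hKne : ∀ s : V, ((π s : ℝ) + (ν s : ℝ)) ≠ 0 := fun s => ne_of_gt (hK s)
  have hZK : ∀ s : V, Z s * ((π s : ℝ) + (ν s : ℝ)) = c := by
    intro s
    rw [hZ s, div_mul_cancel₀ _ (hKne s)]
  -- P + M = c * |N+|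
  have hA : P + M = c * (Np.card : ℝ) := by
    rw [hP, hM, ← Finset.sum_add_distrib]
    have : ∀ s ∈ Np, Z s * (π s : ℝ) + Z s * (ν s : ℝ) = c := by
      intro s _
      rw [← mul_add]; exact hZK s
    rw [Finset.sum_congr rfl this, Finset.sum_const, nsmul_eq_mul, mul_comm]
  have hB : M + Q = c * (Nm.card : ℝ) := by
    rw [← hrec, hQ, ← Finset.sum_add_distrib]
    have : ∀ s ∈ Nm, Z s * (π s : ℝ) + Z s * (ν s : ℝ) = c := by
      intro s _
      rw [← mul_add]; exact hZK s
    rw [Finset.sum_congr rfl this, Finset.sum_const, nsmul_eq_mul, mul_comm]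
  have hnp : 0 < (Np.card : ℝ) := by exact_mod_cast Finset.card_pos.mpr hNp
  have hnm : 0 < (Nm.card : ℝ) := by exact_mod_cast Finset.card_pos.mpr hNm
  have hApos : 0 < P + M := hA ▸ mul_pos hc hnp
  have hBpos : 0 < M + Q := hB ▸ mul_pos hc hnm
  -- sums of π/K
  have hsum1 : ∑ s ∈ Np, (π s : ℝ) / ((π s : ℝ) + (ν s : ℝ)) = P / c := by
    rw [hP]
    rw [eq_div_iff (ne_of_gt hc)]
    rw [Finset.sum_mul]
    apply Finset.sum_congr rfl
    intro s _
    rw [hZ s]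
    field_simp
  have hsum2 : ∑ s ∈ Nm, (π s : ℝ) / ((π s : ℝ) + (ν s : ℝ)) = M / c := by
    rw [← hrec]
    rw [eq_div_iff (ne_of_gt hc)]
    rw [Finset.sum_mul]
    apply Finset.sum_congr rfl
    intro s _
    rw [hZ s]
    field_simp
  have hα' : α = P / (P + M) - M / (M + Q) := by
    rw [hα, hsum1, hsum2, hA, hB]
    field_simp
  rw [hα']
  subst hr hap ham hepp hemm hepm hT
  have hTne : (P + 2 * M + Q) ≠ 0 := ne_of_gt hTpos
  rw [div_eq_iff (ne_of_gt hden)]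
  field_simp
  ring
end

section
/- Corollary: If in a reciprocated two-type network every node has the same out-degree K ≥ 1 (e.g., a disjoint union of cliques all of the same size K+1 with doubled directed edges), then Newman's r computed with all edge weights equal to 1 equals Bergstrom's α. -/
/-!
Because `e₊₊ + 2 e₊₋ + e₋₋ = 1`, Newman's coefficient of a symmetric two-type mixing matrix
simplifies to `r = 1 - e₊₋ / (a₊ a₋)`. When every node has out-degree `K`, the ends of edges
leaving a class number `K` times its size, so `a₊ = |N₊| / |V|` and `a₋ = |N₋| / |V|`, while
`e₊₋ = M / (K |V|)`. Hence `r = 1 - M / (K |N₊|) - M / (K |N₋|)`, and this is `α`, since the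
mean fraction of `+`-neighbours is `1 - M / (K |N₊|)` in `N₊` and `M / (K |N₋|)` in `N₋`.
-/

open Finset

theorem newman_two_type_eq_one_sub {epp epm emm : ℝ} (htot : epp + 2 * epm + emm = 1)
    (hp : epp + epm ≠ 0) (hm : epm + emm ≠ 0) :
    (epp + emm - (epp + epm) ^ 2 - (epm + emm) ^ 2) / (1 - (epp + epm) ^ 2 - (epm + emm) ^ 2) =
      1 - epm / ((epp + epm) * (epm + emm)) := by
  obtain rfl : emm = 1 - epp - 2 * epm := by linarith
  have hden : 1 - (epp + epm) ^ 2 - (epm + (1 - epp - 2 * epm)) ^ 2 =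
      2 * ((epp + epm) * (epm + (1 - epp - 2 * epm))) := by ring
  rw [hden, div_eq_iff (by positivity)]
  field_simp
  ring

theorem sum_cast_add_sum_cast_eq_card_mul {ι R : Type*} [AddCommMonoidWithOne R]
    (S : Finset ι) (f g : ι → ℕ) (K : ℕ) (h : ∀ i ∈ S, f i + g i = K) :
    ∑ i ∈ S, (f i : R) + ∑ i ∈ S, (g i : R) = #S • (K : R) := by
  rw [← sum_add_distrib, sum_congr rfl fun i hi => by rw [← Nat.cast_add, h i hi], sum_const]

theorem newman_eq_bergstrom_equal_degree_general
    {V : Type*} [Fintype V]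
    (pos : V → Bool) (π ν : V → ℕ)
    (K : ℕ) (hK : 1 ≤ K)
    (hdeg : ∀ s, π s + ν s = K)
    (hNp : (univ.filter (fun s => pos s = true)).Nonempty)
    (hNm : (univ.filter (fun s => pos s = false)).Nonempty)
    (P M Q : ℝ)
    (hP : P = ∑ s ∈ univ.filter (fun s => pos s = true), (π s : ℝ))
    (hM : M = ∑ s ∈ univ.filter (fun s => pos s = true), (ν s : ℝ))
    (hQ : Q = ∑ s ∈ univ.filter (fun s => pos s = false), (ν s : ℝ))
    -- reciprocity: the count of −→+ edges equals that of +→− edges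
    (hrec : ∑ s ∈ univ.filter (fun s => pos s = false), (π s : ℝ) = M)
    (T : ℝ) (hT : T = P + 2 * M + Q)
    (epp emm epm ap am : ℝ)
    (hepp : epp = P / T) (hemm : emm = Q / T) (hepm : epm = M / T)
    (hap : ap = epp + epm) (ham : am = epm + emm)
    (r : ℝ) (hr : r = (epp + emm - ap ^ 2 - am ^ 2) / (1 - ap ^ 2 - am ^ 2))
    (α : ℝ)
    (hα : α =
      (1 / ((univ.filter (fun s => pos s = true)).card : ℝ)) *
        ∑ s ∈ univ.filter (fun s => pos s = true), (π s : ℝ) / (K : ℝ) -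
      (1 / ((univ.filter (fun s => pos s = false)).card : ℝ)) *
        ∑ s ∈ univ.filter (fun s => pos s = false), (π s : ℝ) / (K : ℝ)) :
    r = α := by
  set a : ℝ := ((univ.filter fun s => pos s = true).card : ℝ)
  set b : ℝ := ((univ.filter fun s => pos s = false).card : ℝ)
  have ha : 0 < a := Nat.cast_pos.mpr hNp.card_pos
  have hb : 0 < b := Nat.cast_pos.mpr hNm.card_pos
  have hK0 : (0 : ℝ) < K := by exact_mod_cast hK
  have hPM : P + M = a * K := by
    rw [hP, hM, sum_cast_add_sum_cast_eq_card_mul _ _ _ _ fun s _ => hdeg s, nsmul_eq_mul]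
  have hMQ : M + Q = b * K := by
    rw [← hrec, hQ, sum_cast_add_sum_cast_eq_card_mul _ _ _ _ fun s _ => hdeg s, nsmul_eq_mul]
  have hT' : T = (a + b) * K := by linarith
  have hap' : ap = a / (a + b) := by
    rw [hap, hepp, hepm, ← add_div, hPM, hT', mul_div_mul_right _ _ hK0.ne']
  have ham' : am = b / (a + b) := by
    rw [ham, hepm, hemm, ← add_div, hMQ, hT', mul_div_mul_right _ _ hK0.ne']
  have htot : epp + 2 * epm + emm = 1 := by
    rw [hepp, hepm, hemm]
    field_simp [hT'.trans_ne (by positivity)]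
    linarith
  rw [hr, hap, ham, newman_two_type_eq_one_sub htot (hap ▸ hap' ▸ by positivity)
    (ham ▸ ham' ▸ by positivity), ← hap, ← ham, hap', ham', hepm, hα, ← sum_div, ← sum_div,
    ← hP, hrec, hT', show P = a * K - M by linarith]
  field_simp
  ring

/-- corollary: if every node has the same out-degree K ≥ 1,
then Newman's r computed with all edge weights equal to 1 equals
Bergstrom's α. -/
theorem newman_eq_bergstrom_equal_degree
    {V : Type*} [Fintype V] [DecidableEq V]
    (pos : V → Bool) (π ν : V → ℕ)
    (K : ℕ) (hK : 1 ≤ K)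
    (hdeg : ∀ s, π s + ν s = K)
    (hNp : (univ.filter (fun s => pos s = true)).Nonempty)
    (hNm : (univ.filter (fun s => pos s = false)).Nonempty)
    (P M Q : ℝ)
    (hP : P = ∑ s ∈ univ.filter (fun s => pos s = true), (π s : ℝ))
    (hM : M = ∑ s ∈ univ.filter (fun s => pos s = true), (ν s : ℝ))
    (hQ : Q = ∑ s ∈ univ.filter (fun s => pos s = false), (ν s : ℝ))
    -- reciprocity: the count of −→+ edges equals that of +→− edges
    (hrec : ∑ s ∈ univ.filter (fun s => pos s = false), (π s : ℝ) = M)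
    (T : ℝ) (hT : T = P + 2 * M + Q) (hTpos : 0 < T)
    (epp emm epm ap am : ℝ)
    (hepp : epp = P / T) (hemm : emm = Q / T) (hepm : epm = M / T)
    (hap : ap = epp + epm) (ham : am = epm + emm)
    (hden : 0 < 1 - ap ^ 2 - am ^ 2)
    (r : ℝ) (hr : r = (epp + emm - ap ^ 2 - am ^ 2) / (1 - ap ^ 2 - am ^ 2))
    (α : ℝ)
    (hα : α =
      (1 / ((univ.filter (fun s => pos s = true)).card : ℝ)) *
        ∑ s ∈ univ.filter (fun s => pos s = true), (π s : ℝ) / (K : ℝ) -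
      (1 / ((univ.filter (fun s => pos s = false)).card : ℝ)) *
        ∑ s ∈ univ.filter (fun s => pos s = false), (π s : ℝ) / (K : ℝ)) :
    r = α :=
  newman_eq_bergstrom_equal_degree_general pos π ν K hK hdeg hNp hNm P M Q hP hM hQ hrec T hT epp
    emm epm ap am hepp hemm hepm hap ham r hr α hα
end
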